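/- arXiv:1407.6848 — 2 statements merged into one kernel-verified Lean document; each statement's English description precedes it below -/
import Mathlib

section
/- Suppose the distribution F on ℝ with finite mean μ is n-completely mixable for some n ∈ ℕ, and let (Y₁,…,Y_n) be a complete mix with marginal distribution F. Define the periodic sequence X_{i+(k−1)n} = Y_i for i = 1,…,n and k ∈ ℕ. Then for every m ∈ ℕ, |S_m − mμ| ≤ max_{i=1,…,n} |Y₁ + ⋯ + Y_i − iμ| almost surely, and the sequence (X_i)_{i∈ℕ} is extremely negatively dependent (END). Moreover, if F has finite variance then sup_m Var(S_m) < ∞, and if n = 2 then the sequence (X_i)_{i∈ℕ} is strongly extremely negatively dependent (SEND). -/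
open MeasureTheory ProbabilityTheory Set Filter Topology Asymptotics

noncomputable section

/-- Generalized inverse `F⁻¹` of the CDF of the distribution `ν`:
`F⁻¹(t) = inf {x | F(x) ≥ t}` for `t ≠ 0` and `F⁻¹(0) = inf {x | F(x) > 0}`. -/
def qf (ν : Measure ℝ) (t : ℝ) : ℝ :=
  if t = 0 then sInf {x : ℝ | 0 < (ν (Iic x)).toReal}
  else sInf {x : ℝ | t ≤ (ν (Iic x)).toReal}

/-- `H(s) = ∫₀ˢ (F⁻¹(t) − μ) dt`. -/
def Hfun (ν : Measure ℝ) (μ : ℝ) (s : ℝ) : ℝ := ∫ t in (0:ℝ)..s, (qf ν t - μ)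

/-- `ν = F(μ−)`. -/
def nuM (ν : Measure ℝ) (μ : ℝ) : ℝ := (ν (Iio μ)).toReal

/-- `ν⁺ = F(μ)`. -/
def nuP (ν : Measure ℝ) (μ : ℝ) : ℝ := (ν (Iic μ)).toReal

/-- `c = H(ν)`, the minimum value of `H`. -/
def cval (ν : Measure ℝ) (μ : ℝ) : ℝ := Hfun ν μ (nuM ν μ)

/-- `A : [c,0] → [0,ν]`, the inverse of `H` on `[0,ν)`, with `A(c) = ν⁺`. -/
def Afun (ν : Measure ℝ) (μ : ℝ) (s : ℝ) : ℝ :=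
  if s = cval ν μ then nuP ν μ
  else sInf {t : ℝ | t ∈ Icc 0 (nuM ν μ) ∧ Hfun ν μ t ≤ s}

/-- `B : [c,0] → [ν⁺,1]`, the inverse of `H` on `(ν⁺,1]`, with `B(c) = ν⁺`. -/
def Bfun (ν : Measure ℝ) (μ : ℝ) (s : ℝ) : ℝ :=
  if s = cval ν μ then nuP ν μ
  else sInf {t : ℝ | t ∈ Icc (nuP ν μ) 1 ∧ s ≤ Hfun ν μ t}

/-- The distribution function `K`, supported on `[c,0]`. -/
def Kfun (ν : Measure ℝ) (μ : ℝ) (s : ℝ) : ℝ :=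
  if 0 < s then 1
  else if s < cval ν μ then 0
  else if s = cval ν μ then nuP ν μ - nuM ν μ
  else Bfun ν μ s - Afun ν μ s

/-- `u(s) = (μ − F⁻¹(A(s))) / (F⁻¹(B(s)) − F⁻¹(A(s)))` for `s ∈ (c,0)`, `u(c) = 1/2`. -/
def ufun (ν : Measure ℝ) (μ : ℝ) (s : ℝ) : ℝ :=
  if s = cval ν μ then 1/2
  else (μ - qf ν (Afun ν μ s)) / (qf ν (Bfun ν μ s) - qf ν (Afun ν μ s))

/-- Generalized inverse of the distribution function `K`. -/
def Kinv (ν : Measure ℝ) (μ : ℝ) (t : ℝ) : ℝ := sInf {s : ℝ | t ≤ Kfun ν μ s}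

/-- The map `t ↦ F⁻¹(B(Y(t))) − F⁻¹(A(Y(t)))` where `Y = K⁻¹` is the quantile
transform of `K`; applied to a uniform random variable it realizes the residual
distribution of `F`. -/
def residualRV (ν : Measure ℝ) (μ : ℝ) (t : ℝ) : ℝ :=
  qf ν (Bfun ν μ (Kinv ν μ t)) - qf ν (Afun ν μ (Kinv ν μ t))

/-- The residual distribution `F̃` of `F`: the law of `F⁻¹(B(Y)) − F⁻¹(A(Y))`
for `Y ∼ K`. -/
def residualDist (ν : Measure ℝ) (μ : ℝ) : Measure ℝ :=
  Measure.map (residualRV ν μ) (volume.restrict (Icc (0:ℝ) 1))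

end


lemma my_sum_mod (n : ℕ) (f : ℕ → ℝ) (m : ℕ) :
    ∑ i ∈ Finset.range m, f (i % n)
      = ((m / n : ℕ) : ℝ) * (∑ i ∈ Finset.range n, f i)
        + ∑ j ∈ Finset.range (m % n), f j := by
  induction m with
  | zero => simp
  | succ m ih =>
    rcases Nat.eq_zero_or_pos n with hn | hn
    · subst hn; simp [Finset.sum_range_succ, ih]
    have hq := Nat.div_add_mod m n
    have hr : m % n < n := Nat.mod_lt _ hn
    rcases Nat.lt_or_ge (m % n + 1) n with h | h
    · have hmod : (m + 1) % n = m % n + 1 := by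
        conv_lhs => rw [← hq]
        rw [add_assoc, Nat.mul_add_mod, Nat.mod_eq_of_lt h]
      have hdiv : (m + 1) / n = m / n := by
        conv_lhs => rw [← hq]
        rw [add_assoc, Nat.mul_add_div hn, Nat.div_eq_of_lt h, add_zero]
      rw [Finset.sum_range_succ, ih, hmod, hdiv, Finset.sum_range_succ]
      ring
    · have hn1 : m % n + 1 = n := le_antisymm hr h
      have hm1 : m + 1 = n * (m / n + 1) := by
        rw [Nat.mul_add, mul_one]; omega
      have hmod : (m + 1) % n = 0 := by rw [hm1]; exact Nat.mul_mod_right _ _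
      have hdiv : (m + 1) / n = m / n + 1 := by
        rw [hm1]; exact Nat.mul_div_cancel_left _ hn
      rw [Finset.sum_range_succ, ih, hmod, hdiv]
      have hsum : (∑ j ∈ Finset.range (m % n), f j) + f (m % n)
          = ∑ i ∈ Finset.range n, f i := by
        rw [← Finset.sum_range_succ, hn1]
      push_cast
      linarith [hsum]

lemma my_variance_congr {Ω : Type*} [MeasurableSpace Ω] {P : Measure Ω} {f g : Ω → ℝ}
    (h : f =ᵐ[P] g) : variance f P = variance g P := by
  unfold ProbabilityTheory.variance ProbabilityTheory.evariance
  rw [integral_congr_ae h]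
  congr 1
  apply lintegral_congr_ae
  filter_upwards [h] with ω hω
  rw [hω]

lemma my_variance_add_const {Ω : Type*} [MeasurableSpace Ω] (P : Measure Ω)
    [IsProbabilityMeasure P] (c : ℝ) (Z : Ω → ℝ) (hZ : Integrable Z P) :
    variance (fun ω => c + Z ω) P = variance Z P := by
  unfold ProbabilityTheory.variance ProbabilityTheory.evariance
  have h1 : ∫ ω, (c + Z ω) ∂P = c + ∫ ω, Z ω ∂P := by
    rw [integral_add (integrable_const c) hZ]; simp
  rw [h1]
  congr 1
  refine lintegral_congr fun ω => ?_
  have : c + Z ω - (c + ∫ ω, Z ω ∂P) = Z ω - ∫ ω, Z ω ∂P := by ring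
  rw [this]

lemma my_aem_of_map {Ω : Type*} [MeasurableSpace Ω] {P : Measure Ω} {f : Ω → ℝ}
    {ν : Measure ℝ} [IsProbabilityMeasure ν] (h : Measure.map f P = ν) :
    AEMeasurable f P := by
  by_contra hc
  have h0 : (0 : Measure ℝ) Set.univ = ν Set.univ := by
    rw [← h, Measure.map_of_not_aemeasurable hc]
  simp [measure_univ] at h0

lemma my_variance_map {Ω : Type*} [MeasurableSpace Ω] (P : Measure Ω) (X : Ω → ℝ)
    (hX : AEMeasurable X P) :
    variance X P = variance id (Measure.map X P) := by
  unfold ProbabilityTheory.variance ProbabilityTheory.evariance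
  rw [integral_map hX aestronglyMeasurable_id]
  congr 1
  rw [lintegral_map' ?_ hX]
  · rfl
  · exact ((measurable_id.sub measurable_const).nnnorm.coe_nnreal_ennreal.pow measurable_const).aemeasurable


/-- **Proposition 2.3.** Suppose `F` (with finite mean `μ`) is `n`-completely mixable and
`(Y₁, …, Y_n)` is a complete mix with marginal distribution `F` (each `Y_i ∼ F` and
`Y₁ + ⋯ + Y_n` is a.s. constant). Define the periodic sequence `X_{i+(k−1)n} = Y_i`,
i.e. `X_i = Y_{i mod n}`. Then for every `m`,
`|S_m − mμ| ≤ max_{i=1,…,n} |Y₁ + ⋯ + Y_i − iμ|` a.s., and the sequence `(X_i)` is END.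
Moreover, if `F` has finite variance then `sup_m Var(S_m) < ∞`, and if in addition
`n = 2` the sequence is SEND. -/
theorem complete_mix_periodic_is_END
    (ν : Measure ℝ) [IsProbabilityMeasure ν] (μ : ℝ)
    (hint : Integrable id ν) (hμ : μ = ∫ x, x ∂ν)
    {Ω : Type*} [MeasurableSpace Ω] (P : Measure Ω) [IsProbabilityMeasure P]
    (n : ℕ) (hn : 0 < n) (Y : ℕ → Ω → ℝ)
    (hY : ∀ i < n, Measure.map (Y i) P = ν)
    (hmix : ∃ c : ℝ, ∀ᵐ ω ∂P, (∑ i ∈ Finset.range n, Y i ω) = c)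
    (X : ℕ → Ω → ℝ) (hX : ∀ i, X i = Y (i % n)) :
    (∀ m : ℕ, ∀ᵐ ω ∂P,
      |(∑ i ∈ Finset.range m, X i ω) - (m : ℝ) * μ| ≤
        (Finset.Icc 1 n).sup' (Finset.nonempty_Icc.mpr hn)
          (fun i => |(∑ j ∈ Finset.range i, Y j ω) - (i : ℝ) * μ|)) ∧
    (∀ k : ℕ → ℝ, Tendsto k atTop atTop →
      ∀ᵐ ω ∂P,
        Tendsto (fun m : ℕ => ((∑ i ∈ Finset.range m, X i ω) - (m : ℝ) * μ) / k m)
          atTop (nhds 0)) ∧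
    (Integrable (fun x : ℝ => x ^ 2) ν →
      (∃ C : ℝ, ∀ m : ℕ,
        variance (fun ω => ∑ i ∈ Finset.range m, X i ω) P ≤ C) ∧
      (n = 2 →
        ∀ (Ω' : Type) (mΩ' : MeasurableSpace Ω') (P' : Measure Ω') (W : ℕ → Ω' → ℝ),
          IsProbabilityMeasure P' → (∀ i, Measure.map (W i) P' = ν) →
          ∀ C : ℝ,
            (∀ m : ℕ, variance (fun ω => ∑ i ∈ Finset.range m, W i ω) P' ≤ C) →
            ∀ m : ℕ, variance (fun ω => ∑ i ∈ Finset.range m, X i ω) P ≤ C)) := by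
  obtain ⟨c, hc⟩ := hmix
  -- a.e. measurability and integrability of the `Y i`
  have hYm : ∀ i < n, AEMeasurable (Y i) P := fun i hi => my_aem_of_map (hY i hi)
  have hYint : ∀ i < n, Integrable (Y i) P := by
    intro i hi
    have h1 : Integrable id (Measure.map (Y i) P) := by rw [hY i hi]; exact hint
    exact (integrable_map_measure aestronglyMeasurable_id (hYm i hi)).mp h1
  have hEY : ∀ i < n, ∫ ω, Y i ω ∂P = μ := by
    intro i hi
    calc ∫ ω, Y i ω ∂P = ∫ x, id x ∂(Measure.map (Y i) P) :=
          (integral_map (hYm i hi) aestronglyMeasurable_id).symm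
      _ = μ := by rw [hY i hi]; simp [hμ]
  have hce : c = (n : ℝ) * μ := by
    have h1 : ∫ ω, (∑ i ∈ Finset.range n, Y i ω) ∂P = c := by
      rw [integral_congr_ae hc]; simp
    rw [integral_finset_sum _ (fun i hi => hYint i (Finset.mem_range.mp hi))] at h1
    rw [Finset.sum_congr rfl (fun i hi => hEY i (Finset.mem_range.mp hi)),
      Finset.sum_const, Finset.card_range, nsmul_eq_mul] at h1
    exact h1.symm
  -- the key a.s. identity
  have hkey : ∀ᵐ ω ∂P, ∀ m : ℕ,
      (∑ i ∈ Finset.range m, X i ω) - (m : ℝ) * μ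
        = (∑ j ∈ Finset.range (m % n), Y j ω) - ((m % n : ℕ) : ℝ) * μ := by
    filter_upwards [hc] with ω hω m
    have h1 : (∑ i ∈ Finset.range m, X i ω)
        = ((m / n : ℕ) : ℝ) * (∑ i ∈ Finset.range n, Y i ω)
          + ∑ j ∈ Finset.range (m % n), Y j ω := by
      simp only [hX]
      exact my_sum_mod n (fun i => Y i ω) m
    rw [h1, hω, hce]
    have hcast : ((m / n : ℕ) : ℝ) * (n : ℝ) + ((m % n : ℕ) : ℝ) = (m : ℝ) := by
      exact_mod_cast Nat.div_add_mod' m n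
    linear_combination μ * hcast
  -- variance of the partial sums only depends on `m % n`
  have hS : ∀ m : ℕ, variance (fun ω => ∑ i ∈ Finset.range m, X i ω) P
      = variance (fun ω => ∑ j ∈ Finset.range (m % n), Y j ω) P := by
    intro m
    have hT : Integrable (fun ω => ∑ j ∈ Finset.range (m % n), Y j ω) P := by
      refine integrable_finset_sum _ (fun j hj => hYint j ?_)
      exact lt_of_lt_of_le (Finset.mem_range.mp hj) (Nat.mod_lt _ hn).le
    have he : (fun ω => ∑ i ∈ Finset.range m, X i ω)
        =ᵐ[P] (fun ω => ((m : ℝ) * μ - ((m % n : ℕ) : ℝ) * μ)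
            + ∑ j ∈ Finset.range (m % n), Y j ω) := by
      filter_upwards [hkey] with ω hω
      have := hω m
      linarith
    rw [my_variance_congr he, my_variance_add_const _ _ _ hT]
  refine ⟨?_, ?_, fun _ => ⟨?_, ?_⟩⟩
  · -- part 1
    intro m
    filter_upwards [hkey] with ω hω
    rw [hω m]
    rcases Nat.eq_zero_or_pos (m % n) with hr | hr
    · rw [hr]
      simp only [Finset.range_zero, Finset.sum_empty, Nat.cast_zero, zero_mul, sub_zero,
        abs_zero]
      exact le_trans (abs_nonneg _)
        (Finset.le_sup' (fun i => |(∑ j ∈ Finset.range i, Y j ω) - (i : ℝ) * μ|)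
          (Finset.mem_Icc.mpr ⟨le_refl 1, hn⟩))
    · exact Finset.le_sup' (fun i => |(∑ j ∈ Finset.range i, Y j ω) - (i : ℝ) * μ|)
        (Finset.mem_Icc.mpr ⟨hr, (Nat.mod_lt _ hn).le⟩)
  · -- part 2 : END
    intro k hk
    filter_upwards [hkey] with ω hω
    set M : ℝ := ∑ r ∈ Finset.range n,
      |(∑ j ∈ Finset.range r, Y j ω) - (r : ℝ) * μ| with hM
    have hMb : ∀ m : ℕ, |(∑ i ∈ Finset.range m, X i ω) - (m : ℝ) * μ| ≤ M := by
      intro m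
      rw [hω m]
      exact Finset.single_le_sum (f := fun r => |(∑ j ∈ Finset.range r, Y j ω) - (r : ℝ) * μ|)
        (fun i _ => abs_nonneg _) (Finset.mem_range.mpr (Nat.mod_lt _ hn))
    have hM0 : 0 ≤ M := Finset.sum_nonneg fun i _ => abs_nonneg _
    refine squeeze_zero_norm' ?_ (Tendsto.div_atTop (tendsto_const_nhds (x := M)) hk)
    filter_upwards [hk.eventually_ge_atTop 1] with m hm
    have hkm : 0 < k m := lt_of_lt_of_le one_pos hm
    rw [Real.norm_eq_abs, abs_div, abs_of_pos hkm]
    exact div_le_div_of_nonneg_right (hMb m) hkm.le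
  · -- part 3a : bounded variances
    refine ⟨(Finset.range n).sup' (Finset.nonempty_range_iff.mpr hn.ne')
      (fun r => variance (fun ω => ∑ j ∈ Finset.range r, Y j ω) P), fun m => ?_⟩
    rw [hS m]
    exact Finset.le_sup' (fun r => variance (fun ω => ∑ j ∈ Finset.range r, Y j ω) P)
      (Finset.mem_range.mpr (Nat.mod_lt m hn))
  · -- part 3b : SEND when n = 2
    intro hn2 Ω' mΩ' P' W hP' hW C hC m
    haveI := hP'
    subst hn2
    have h0C : (0 : ℝ) ≤ C := le_trans (variance_nonneg _ _) (hC 0)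
    rw [hS m]
    rcases Nat.mod_two_eq_zero_or_one m with hr | hr
    · rw [hr]
      have e0 : (fun ω : Ω => ∑ j ∈ Finset.range 0, Y j ω) = fun _ => (0 : ℝ) := by
        funext ω; simp
      rw [e0]
      calc variance (fun _ : Ω => (0 : ℝ)) P = variance (0 : Ω → ℝ) P := rfl
        _ = 0 := variance_zero P
        _ ≤ C := h0C
    · rw [hr]
      have e1 : (fun ω : Ω => ∑ j ∈ Finset.range 1, Y j ω) = Y 0 := by
        funext ω; simp
      rw [e1, my_variance_map P (Y 0) (hYm 0 (by omega)), hY 0 (by omega)]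
      have e2 : (fun ω : Ω' => ∑ i ∈ Finset.range 1, W i ω) = W 0 := by
        funext ω; simp
      have hC1 := hC 1
      rw [e2, my_variance_map P' (W 0) (my_aem_of_map (hW 0)), hW 0] at hC1
      exact hC1
end

section
/- Let F be a cumulative distribution function on ℝ supported on [a,b], a < b, a,b ∈ ℝ, with mean μ. Then for every convex function g : ℝ → ℝ and every n ∈ ℕ, g(nμ) ≤ inf_{S∈𝔖_n} E[g(S)] ≤ (1/2)·g(nμ + (b−a)) + (1/2)·g(nμ − (b−a)). -/
/-! Every admissible sum `S` has mean `nμ`, so Jensen's inequality gives the lower bound.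
For the upper bound let `q` be the quantile function of `F`, so that `q(U) ∼ F` for `U` uniform
on the circle `ℝ/ℤ`, and take `X_i = q(U + i/n)`. The sum `S` is `1/n`-periodic in `U`, and on
one period it is a sum of `n` equally spaced samples of the monotone `[a, b]`-valued `q`; moving
`U` by at most `1/n` pushes each sample at most onto the next one, so `S` varies by at most
`b - a`. Hence `S ∈ [nμ - (b - a), nμ + (b - a)]`, where `g` lies below its chord, and the chord
has mean value `(g(nμ + (b - a)) + g(nμ - (b - a)))/2` at `nμ`. -/

open MeasureTheory ProbabilityTheory Set Filter Topology

theorem ConvexOn.le_chord {g : ℝ → ℝ} {x y z : ℝ} (hg : ConvexOn ℝ (Icc x y) g) (hxy : x < y)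
    (hz : z ∈ Icc x y) : g z ≤ ((y - z) * g x + (z - x) * g y) / (y - x) := by
  have hyx : 0 < y - x := sub_pos.2 hxy
  have hcomb : (y - z) / (y - x) * x + (z - x) / (y - x) * y = z := by
    field_simp; ring
  have key := hg.2 (left_mem_Icc.2 hxy.le) (right_mem_Icc.2 hxy.le)
    (div_nonneg (sub_nonneg.2 hz.2) hyx.le) (div_nonneg (sub_nonneg.2 hz.1) hyx.le)
    (by field_simp; ring)
  simp only [smul_eq_mul, hcomb] at key
  calc g z ≤ _ := key
    _ = _ := by field_simp

section Integral

variable {Ω : Type*} {mΩ : MeasurableSpace Ω} {P : Measure Ω} {S : Ω → ℝ} {x y : ℝ}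

theorem integrable_comp_of_ae_mem_Icc [IsFiniteMeasure P] {g : ℝ → ℝ} (hg : Continuous g)
    (hS : AEMeasurable S P) (hSxy : ∀ᵐ ω ∂P, S ω ∈ Icc x y) :
    Integrable (fun ω ↦ g (S ω)) P := by
  obtain ⟨C, hC⟩ := isCompact_Icc.exists_bound_of_continuousOn hg.continuousOn
  exact .of_bound (hg.measurable.comp_aemeasurable hS).aestronglyMeasurable C
    (hSxy.mono fun ω hω ↦ hC _ hω)

/-- The Edmundson–Madansky inequality. -/
theorem ConvexOn.integral_comp_le_chord [IsProbabilityMeasure P] {g : ℝ → ℝ}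
    (hg : ConvexOn ℝ univ g) (hxy : x < y) (hS : AEMeasurable S P)
    (hSxy : ∀ᵐ ω ∂P, S ω ∈ Icc x y) :
    ∫ ω, g (S ω) ∂P ≤ ((y - ∫ ω, S ω ∂P) * g x + (∫ ω, S ω ∂P - x) * g y) / (y - x) := by
  have hgc : Continuous g := continuousOn_univ.mp (hg.continuousOn isOpen_univ)
  have hSint : Integrable S P := integrable_comp_of_ae_mem_Icc continuous_id hS hSxy
  calc ∫ ω, g (S ω) ∂P ≤ ∫ ω, ((y - S ω) * g x + (S ω - x) * g y) / (y - x) ∂P :=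
        integral_mono_ae (integrable_comp_of_ae_mem_Icc hgc hS hSxy)
          (integrable_comp_of_ae_mem_Icc (g := fun s ↦ ((y - s) * g x + (s - x) * g y) / (y - x))
            (by fun_prop) hS hSxy)
          (hSxy.mono fun ω hω ↦ (hg.subset (subset_univ _) (convex_Icc x y)).le_chord hxy hω)
    _ = _ := by
        rw [integral_div, integral_add (by fun_prop) (by fun_prop), integral_mul_const,
          integral_mul_const, integral_sub (by fun_prop) hSint, integral_sub hSint (by fun_prop)]
        simp

theorem mem_Icc_integral_of_forall_le_add [IsProbabilityMeasure P] (hS : Integrable S P) {d : ℝ}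
    (h : ∀ ω ω', S ω ≤ S ω' + d) (ω : Ω) :
    S ω ∈ Icc (∫ ω', S ω' ∂P - d) (∫ ω', S ω' ∂P + d) := by
  have hle : ∫ ω', S ω' ∂P ≤ S ω + d := by
    simpa using integral_mono hS (integrable_const (S ω + d)) fun ω' ↦ h ω' ω
  have hge : S ω - d ≤ ∫ ω', S ω' ∂P := by
    simpa using integral_mono (integrable_const (S ω - d)) hS fun ω' ↦ by linarith [h ω ω']
  constructor <;> linarith

end Integral

section IdenticalLaws

variable {Ω ι : Type*} {mΩ : MeasurableSpace Ω} {P : Measure Ω} {ν : Measure ℝ} [NeZero ν]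
  {a b : ℝ}

theorem ae_mem_of_map_eq {X : Ω → ℝ} {s : Set ℝ} (hX : P.map X = ν) (hν : ν sᶜ = 0) :
    ∀ᵐ ω ∂P, X ω ∈ s :=
  ae_of_ae_map (.of_map_ne_zero (hX ▸ NeZero.ne ν)) (hX ▸ mem_ae_iff.mpr hν)

variable [Fintype ι] {X : ι → Ω → ℝ}

theorem aemeasurable_sum_of_map_eq (hX : ∀ i, P.map (X i) = ν) :
    AEMeasurable (fun ω ↦ ∑ i, X i ω) P :=
  Finset.aemeasurable_fun_sum _ fun i _ ↦ .of_map_ne_zero ((hX i) ▸ NeZero.ne ν)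

theorem ae_sum_mem_Icc_of_map_eq (hX : ∀ i, P.map (X i) = ν) (hν : ν (Icc a b)ᶜ = 0) :
    ∀ᵐ ω ∂P, ∑ i, X i ω ∈ Icc (Fintype.card ι * a) (Fintype.card ι * b) := by
  filter_upwards [ae_all_iff.mpr fun i ↦ ae_mem_of_map_eq (hX i) hν] with ω hω
  have h := Finset.sum_le_sum (s := Finset.univ) fun i _ ↦ (hω i).1
  have h' := Finset.sum_le_sum (s := Finset.univ) fun i _ ↦ (hω i).2
  simp only [Finset.sum_const, Finset.card_univ, nsmul_eq_mul] at h h'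
  exact ⟨h, h'⟩

theorem integral_sum_of_map_eq [IsFiniteMeasure P] (hX : ∀ i, P.map (X i) = ν)
    (hν : ν (Icc a b)ᶜ = 0) :
    ∫ ω, ∑ i, X i ω ∂P = Fintype.card ι * ∫ x, x ∂ν := by
  have hXi : ∀ i, AEMeasurable (X i) P := fun i ↦ .of_map_ne_zero ((hX i) ▸ NeZero.ne ν)
  have hint : ∀ i, Integrable (X i) P := fun i ↦
    integrable_comp_of_ae_mem_Icc continuous_id (hXi i) (ae_mem_of_map_eq (hX i) hν)
  have hmean : ∀ i, ∫ ω, X i ω ∂P = ∫ x, x ∂ν := fun i ↦ by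
    rw [← hX i]; exact (integral_map (hXi i) aestronglyMeasurable_id).symm
  simp [integral_finsetSum _ fun i _ ↦ hint i, hmean]

theorem ConvexOn.le_integral_comp_sum_of_map_eq [IsProbabilityMeasure P] {g : ℝ → ℝ}
    (hg : ConvexOn ℝ univ g) (hX : ∀ i, P.map (X i) = ν) (hν : ν (Icc a b)ᶜ = 0) :
    g (Fintype.card ι * ∫ x, x ∂ν) ≤ ∫ ω, g (∑ i, X i ω) ∂P := by
  have hgc : Continuous g := continuousOn_univ.mp (hg.continuousOn isOpen_univ)
  have hS := aemeasurable_sum_of_map_eq hX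
  have hSab := ae_sum_mem_Icc_of_map_eq hX hν
  rw [← integral_sum_of_map_eq hX hν]
  exact hg.map_integral_le hgc.continuousOn isClosed_univ (ae_of_all _ fun _ ↦ mem_univ _)
    (integrable_comp_of_ae_mem_Icc continuous_id hS hSab)
    (integrable_comp_of_ae_mem_Icc hgc hS hSab)

end IdenticalLaws

section CdfOfSupported

variable {ν : Measure ℝ} [IsProbabilityMeasure ν] {a b : ℝ}

theorem cdf_eq_zero_of_measure_compl_Icc_of_lt (hν : ν (Icc a b)ᶜ = 0) {x : ℝ} (hx : x < a) :
    cdf ν x = 0 := by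
  rw [cdf_eq_real, measureReal_def, measure_mono_null (fun y hy ↦ ?_) hν, ENNReal.toReal_zero]
  exact fun h ↦ (lt_irrefl _ ((h.1.trans hy).trans_lt hx))

theorem cdf_eq_one_of_measure_compl_Icc (hν : ν (Icc a b)ᶜ = 0) : cdf ν b = 1 := by
  have : ν (Iic b)ᶜ = 0 := measure_mono_null (compl_subset_compl.2 fun _ hy ↦ hy.2) hν
  rw [cdf_eq_real, measureReal_def, (prob_compl_eq_zero_iff measurableSet_Iic).1 this,
    ENNReal.toReal_one]

end CdfOfSupported

/-- The quantile function of `ν`, made total by `insert b`: it is monotone and `[a, b]`-valued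
on all of `ℝ`, and on `(0, 1]` it is the generalized inverse of `cdf ν`. -/
noncomputable def quantileIcc (ν : Measure ℝ) (a b u : ℝ) : ℝ :=
  sInf (insert b {x ∈ Icc a b | u ≤ cdf ν x})

namespace quantileIcc

variable {ν : Measure ℝ} {a b : ℝ}

theorem bddBelow (hab : a ≤ b) (u : ℝ) : BddBelow (insert b {x ∈ Icc a b | u ≤ cdf ν x}) :=
  ⟨a, forall_mem_insert.2 ⟨hab, fun _ hx ↦ hx.1.1⟩⟩

theorem mem_Icc (hab : a ≤ b) (u : ℝ) : quantileIcc ν a b u ∈ Icc a b :=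
  ⟨le_csInf (insert_nonempty _ _) (forall_mem_insert.2 ⟨hab, fun _ hx ↦ hx.1.1⟩),
    csInf_le (bddBelow hab u) (mem_insert _ _)⟩

theorem monotone (hab : a ≤ b) : Monotone (quantileIcc ν a b) := fun _ _ huv ↦
  csInf_le_csInf (bddBelow hab _) (insert_nonempty _ _)
    (insert_subset_insert fun _ hx ↦ ⟨hx.1, huv.trans hx.2⟩)

variable [IsProbabilityMeasure ν]

theorem le_iff (hab : a ≤ b) (hν : ν (Icc a b)ᶜ = 0) {u : ℝ} (hu : u ∈ Ioc 0 1) (x : ℝ) :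
    quantileIcc ν a b u ≤ x ↔ u ≤ cdf ν x := by
  constructor
  · intro h
    have hgt : ∀ y, quantileIcc ν a b u < y → u ≤ cdf ν y := fun y hy ↦ by
      obtain ⟨z, hz, hzy⟩ := exists_lt_of_csInf_lt (insert_nonempty _ _) hy
      rcases hz with rfl | hz
      · calc u ≤ cdf ν z := hu.2.trans (cdf_eq_one_of_measure_compl_Icc hν).ge
          _ ≤ cdf ν y := monotone_cdf ν hzy.le
      · exact hz.2.trans (monotone_cdf ν hzy.le)
    have hq : u ≤ cdf ν (quantileIcc ν a b u) :=
      ge_of_tendsto (((cdf ν).right_continuous _).mono_left (nhdsWithin_mono _ Ioi_subset_Ici_self))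
        (eventually_nhdsWithin_of_forall hgt)
    exact hq.trans (monotone_cdf ν h)
  · intro h
    rcases le_or_gt b x with hbx | hxb
    · exact (mem_Icc hab u).2.trans hbx
    rcases lt_or_ge x a with hxa | hax
    · rw [cdf_eq_zero_of_measure_compl_Icc_of_lt hν hxa] at h
      exact absurd h (not_le.2 hu.1)
    · exact csInf_le (bddBelow hab u) (mem_insert_of_mem _ ⟨⟨hax, hxb.le⟩, h⟩)

theorem map_volume_Ioc (hab : a ≤ b) (hν : ν (Icc a b)ᶜ = 0) :
    (volume.restrict (Ioc 0 1)).map (quantileIcc ν a b) = ν := by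
  have hmeas : Measurable (quantileIcc ν a b) := (monotone hab).measurable
  have : IsProbabilityMeasure (volume.restrict (Ioc (0 : ℝ) 1)) := ⟨by simp⟩
  have : IsProbabilityMeasure ((volume.restrict (Ioc 0 1)).map (quantileIcc ν a b)) :=
    Measure.isProbabilityMeasure_map hmeas.aemeasurable
  refine Measure.ext_of_Iic _ _ fun x ↦ ?_
  have hpre : quantileIcc ν a b ⁻¹' Iic x ∩ Ioc 0 1 = Ioc 0 (cdf ν x) := by
    ext u
    simp only [mem_inter_iff, mem_preimage, mem_Iic, mem_Ioc]
    constructor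
    · rintro ⟨h, hu0, hu1⟩
      exact ⟨hu0, (le_iff hab hν ⟨hu0, hu1⟩ x).1 h⟩
    · rintro ⟨hu0, hux⟩
      have hu1 := hux.trans (cdf_le_one ν x)
      exact ⟨(le_iff hab hν ⟨hu0, hu1⟩ x).2 hux, hu0, hu1⟩
  rw [Measure.map_apply hmeas measurableSet_Iic, Measure.restrict_apply (hmeas measurableSet_Iic),
    hpre, Real.volume_Ioc, sub_zero, ofReal_cdf]

end quantileIcc

/-- Since `s + i * h ≤ t + (i + 1) * h`, the `s`-samples are dominated by the `t`-samples shifted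
by one step, and only the last `s`-sample and the first `t`-sample are left over. -/
theorem Monotone.sum_range_le_sum_range_add {f : ℝ → ℝ} {a b : ℝ} (hf : Monotone f)
    (hfab : ∀ x, f x ∈ Icc a b) {s t h : ℝ} (hst : s ≤ t + h) (n : ℕ) :
    ∑ i ∈ Finset.range n, f (s + i * h) ≤ ∑ i ∈ Finset.range n, f (t + i * h) + (b - a) := by
  cases n with
  | zero => simpa using (hfab 0).1.trans (hfab 0).2
  | succ m =>
    have hshift : ∑ i ∈ Finset.range m, f (s + i * h) ≤ ∑ i ∈ Finset.range m, f (t + (i + 1) * h) :=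
      Finset.sum_le_sum fun i _ ↦ hf (by linarith)
    rw [Finset.sum_range_succ, Finset.sum_range_succ']
    push_cast
    linarith [(hfab (s + m * h)).2, (hfab (t + 0 * h)).1]

theorem Function.Periodic.sum_range_add_mul {G : ℝ → ℝ} {h : ℝ} {n : ℕ}
    (hG : Function.Periodic G (n * h)) :
    Function.Periodic (fun u ↦ ∑ i ∈ Finset.range n, G (u + i * h)) h := fun u ↦ by
  have hsucc := Finset.sum_range_succ (fun i : ℕ ↦ G (u + i * h)) n
  rw [Finset.sum_range_succ'] at hsucc
  simp only [Nat.cast_add, Nat.cast_one, Nat.cast_zero, zero_mul, add_zero, hG u] at hsucc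
  calc ∑ i ∈ Finset.range n, G (u + h + i * h) = ∑ i ∈ Finset.range n, G (u + (i + 1) * h) :=
        Finset.sum_congr rfl fun i _ ↦ by ring_nf
    _ = ∑ i ∈ Finset.range n, G (u + i * h) := add_right_cancel hsucc

namespace AddCircle

variable {T : ℝ} [Fact (0 < T)] {a : ℝ} {β : Type*} [MeasurableSpace β] {f : ℝ → β}

theorem measurable_liftIoc (hf : Measurable f) : Measurable (liftIoc T a f) :=
  (hf.comp measurable_subtype_coe).comp (measurableEquivIoc T a).measurable

theorem map_liftIoc (hf : Measurable f) :
    volume.map (liftIoc T a f) = (volume.restrict (Ioc a (a + T))).map f := by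
  rw [← (AddCircle.measurePreserving_mk T a).map_eq,
    Measure.map_map (measurable_liftIoc hf) AddCircle.measurable_mk']
  exact Measure.map_congr <| (ae_restrict_mem measurableSet_Ioc).mono fun _ hu ↦
    liftIoc_coe_apply hu

end AddCircle

noncomputable def rotationCoupling (f : ℝ → ℝ) (n i : ℕ) (ω : UnitAddCircle) : ℝ :=
  AddCircle.liftIoc 1 0 f (ω + ((i / n : ℝ) : UnitAddCircle))

section RotationCoupling

variable {f : ℝ → ℝ} {n : ℕ}

theorem map_rotationCoupling (hf : Measurable f) (i : ℕ) :
    volume.map (rotationCoupling f n i) = (volume.restrict (Ioc 0 1)).map f := by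
  change volume.map (AddCircle.liftIoc 1 0 f ∘ (· + ((i / n : ℝ) : UnitAddCircle))) = _
  rw [← Measure.map_map (AddCircle.measurable_liftIoc hf) (measurable_add_const _),
    map_add_right_eq_self, AddCircle.map_liftIoc hf, zero_add]

theorem sum_rotationCoupling_le {a b : ℝ} (hf : Monotone f) (hfab : ∀ x, f x ∈ Icc a b)
    (hn : 0 < n) (ω ω' : UnitAddCircle) :
    ∑ i ∈ Finset.range n, rotationCoupling f n i ω ≤
      ∑ i ∈ Finset.range n, rotationCoupling f n i ω' + (b - a) := by
  have hn' : (0 : ℝ) < n := Nat.cast_pos.2 hn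
  set G : ℝ → ℝ := fun v ↦ AddCircle.liftIoc 1 0 f v
  have hG : Function.Periodic G (n * (1 / n)) := by
    rw [mul_one_div_cancel hn'.ne']
    exact fun v ↦ by simp only [G, AddCircle.coe_add_period]
  have hlift : ∀ u : ℝ, ∑ i ∈ Finset.range n, rotationCoupling f n i u =
      ∑ i ∈ Finset.range n, G (u + i * (1 / n)) := fun u ↦
    Finset.sum_congr rfl fun i _ ↦ by
      simp only [rotationCoupling, G, mul_one_div, AddCircle.coe_add]
  have hmem : ∀ t ∈ Ioc (0 : ℝ) (0 + 1 / n), ∀ i ∈ Finset.range n,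
      t + i * (1 / n) ∈ Ioc 0 (0 + 1) := by
    rintro t ⟨ht0, ht1⟩ i hi
    have hi' : (i : ℝ) + 1 ≤ n := by exact_mod_cast Finset.mem_range.1 hi
    refine ⟨by positivity, ?_⟩
    calc t + i * (1 / n) ≤ (i + 1) * (1 / n) := by linarith
      _ ≤ n * (1 / n) := by gcongr
      _ = 0 + 1 := by rw [mul_one_div_cancel hn'.ne', zero_add]
  have hbase : ∀ t ∈ Ioc (0 : ℝ) (0 + 1 / n), ∑ i ∈ Finset.range n, G (t + i * (1 / n)) =
      ∑ i ∈ Finset.range n, f (t + i * (1 / n)) := fun t ht ↦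
    Finset.sum_congr rfl fun i hi ↦ AddCircle.liftIoc_coe_apply (hmem t ht i hi)
  obtain ⟨u, rfl⟩ := QuotientAddGroup.mk_surjective ω
  obtain ⟨u', rfl⟩ := QuotientAddGroup.mk_surjective ω'
  obtain ⟨s, hs, hus⟩ := hG.sum_range_add_mul.exists_mem_Ioc (one_div_pos.2 hn') u 0
  obtain ⟨t, ht, hut⟩ := hG.sum_range_add_mul.exists_mem_Ioc (one_div_pos.2 hn') u' 0
  rw [hlift, hlift, hus, hut, hbase s hs, hbase t ht]
  exact hf.sum_range_le_sum_range_add hfab (by linarith [hs.2, ht.1]) n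

end RotationCoupling

instance : IsProbabilityMeasure (volume : Measure UnitAddCircle) := ⟨UnitAddCircle.measure_univ⟩

theorem exists_rotationCoupling_integral_le {ν : Measure ℝ} [IsProbabilityMeasure ν] {a b : ℝ}
    (hab : a < b) (hν : ν (Icc a b)ᶜ = 0) {n : ℕ} (hn : 0 < n) {g : ℝ → ℝ}
    (hg : ConvexOn ℝ univ g) :
    ∃ X : Fin n → UnitAddCircle → ℝ, (∀ i, volume.map (X i) = ν) ∧
      ∫ ω, g (∑ i, X i ω) ≤
        (g (n * ∫ x, x ∂ν + (b - a)) + g (n * ∫ x, x ∂ν - (b - a))) / 2 := by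
  have hq := quantileIcc.monotone (ν := ν) hab.le
  set X : Fin n → UnitAddCircle → ℝ := fun i ↦ rotationCoupling (quantileIcc ν a b) n i
  have hX : ∀ i, volume.map (X i) = ν := fun i ↦
    (map_rotationCoupling hq.measurable i).trans (quantileIcc.map_volume_Ioc hab.le hν)
  refine ⟨X, hX, ?_⟩
  have hosc : ∀ ω ω', ∑ i, X i ω ≤ ∑ i, X i ω' + (b - a) := fun ω ω' ↦ by
    rw [Fin.sum_univ_eq_sum_range (fun i ↦ rotationCoupling _ n i ω),
      Fin.sum_univ_eq_sum_range (fun i ↦ rotationCoupling _ n i ω')]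
    exact sum_rotationCoupling_le hq (quantileIcc.mem_Icc hab.le) hn ω ω'
  have hmean : ∫ ω, ∑ i, X i ω = n * ∫ x, x ∂ν := by
    simpa using integral_sum_of_map_eq hX hν
  have hS := aemeasurable_sum_of_map_eq hX
  have hSint : Integrable (fun ω ↦ ∑ i, X i ω) :=
    integrable_comp_of_ae_mem_Icc continuous_id hS (ae_sum_mem_Icc_of_map_eq hX hν)
  have hrange := mem_Icc_integral_of_forall_le_add hSint hosc
  have hchord := hg.integral_comp_le_chord (by linarith) hS (ae_of_all _ hrange)
  rw [hmean] at hchord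
  refine hchord.trans_eq ?_
  generalize (n : ℝ) * ∫ x, x ∂ν = p
  rw [div_eq_div_iff (by linarith) two_ne_zero]
  ring

/-- **Theorem 3.1.** Suppose `F` is a distribution on `[a,b]`, `a < b`, with mean `μ`.
Then for any convex function `g : ℝ → ℝ`,
`g(nμ) ≤ inf_{S ∈ 𝔖_n} E[g(S)] ≤ g(nμ + (b−a))/2 + g(nμ − (b−a))/2`:
every `S = X₁ + ⋯ + X_n` with `X_i ∼ F` satisfies `g(nμ) ≤ E[g(S)]`, and some such `S`
satisfies `E[g(S)] ≤ g(nμ + (b−a))/2 + g(nμ − (b−a))/2`. -/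
theorem convex_expectation_bounds
    (ν : Measure ℝ) [IsProbabilityMeasure ν] (a b μ : ℝ) (hab : a < b)
    (hsupp : ν (Icc a b)ᶜ = 0) (hμ : μ = ∫ x, x ∂ν) (n : ℕ) (hn : 0 < n)
    (g : ℝ → ℝ) (hg : ConvexOn ℝ univ g) :
    (∀ (Ω : Type) (mΩ : MeasurableSpace Ω) (P : Measure Ω) (X : Fin n → Ω → ℝ),
      IsProbabilityMeasure P → (∀ i, Measure.map (X i) P = ν) →
      g ((n : ℝ) * μ) ≤ ∫ ω, g (∑ i, X i ω) ∂P) ∧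
    (∃ (Ω : Type) (mΩ : MeasurableSpace Ω) (P : Measure Ω) (X : Fin n → Ω → ℝ),
      IsProbabilityMeasure P ∧ (∀ i, Measure.map (X i) P = ν) ∧
      ∫ ω, g (∑ i, X i ω) ∂P ≤
        (g ((n : ℝ) * μ + (b - a)) + g ((n : ℝ) * μ - (b - a))) / 2) := by
  subst hμ
  refine ⟨fun Ω mΩ P X hP hX ↦ ?_, ?_⟩
  · simpa using hg.le_integral_comp_sum_of_map_eq hX hsupp
  · obtain ⟨X, hX, hle⟩ := exists_rotationCoupling_integral_le hab hsupp hn hg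
    exact ⟨UnitAddCircle, inferInstance, volume, X, inferInstance, hX, hle⟩
end
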